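/- Let x and y be nonzero precision-p binary floating-point numbers with exponents e_x, e_y. Then |y| ≤ ulp(x) if and only if e_x - e_y > p - 1, or (e_x - e_y = p - 1 and y is a power of two, i.e., |y| = 2^(e_y)). -/

import Mathlib

/-! A float with exponent `e` lies in the binade `[2^e, 2^(e+1))` and equals its lower end exactly
when it is a power of two, so comparing it with the power of two `ulp(x) = 2^(ex-(p-1))` reduces
to comparing exponents. -/

/-- x is a nonzero precision-p binary float with exponent e:
x = ±m·2^(e-(p-1)) with 2^(p-1) ≤ m < 2^p. -/
def FpVal (p : ℕ) (e : ℤ) (x : ℝ) : Prop :=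
  ∃ m : ℤ, (2 : ℤ) ^ (p - 1) ≤ |m| ∧ |m| < (2 : ℤ) ^ p ∧
    x = (m : ℝ) * (2 : ℝ) ^ (e - ((p : ℤ) - 1))

theorem le_zpow_iff_of_mem_Ico {K : Type*} [Field K] [LinearOrder K] [IsStrictOrderedRing K]
    {a b : K} (hb : 1 < b) {e k : ℤ} (ha : a ∈ Set.Ico (b ^ e) (b ^ (e + 1))) :
    a ≤ b ^ k ↔ e < k ∨ (e = k ∧ a = b ^ e) := by
  rcases lt_trichotomy e k with h | rfl | h
  · exact iff_of_true (ha.2.le.trans (zpow_le_zpow_right₀ hb.le (by omega))) (Or.inl h)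
  · simp only [lt_irrefl, true_and, false_or]
    exact ha.1.ge_iff_eq'
  · refine iff_of_false (fun hle => ?_) (by omega)
    exact (zpow_lt_zpow_right₀ hb h).not_ge (ha.1.trans hle)

theorem FpVal.abs_mem_Ico {p : ℕ} {e : ℤ} {x : ℝ} (hx : FpVal p e x) :
    |x| ∈ Set.Ico ((2 : ℝ) ^ e) (2 ^ (e + 1)) := by
  obtain ⟨m, hlo, hhi, rfl⟩ := hx
  -- for `p = 0` the significand range `[1, 1)` is empty
  have hp : 1 ≤ p := by
    by_contra! h
    simp only [Nat.lt_one_iff.mp h, zero_tsub, pow_zero] at hlo hhi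
    omega
  have hscale : (0 : ℝ) < 2 ^ (e - ((p : ℤ) - 1)) := by positivity
  have hlo' : (2 : ℝ) ^ ((p : ℤ) - 1) ≤ |(m : ℝ)| := by
    rw [show (p : ℤ) - 1 = ((p - 1 : ℕ) : ℤ) by omega, zpow_natCast, ← Int.cast_abs]
    exact_mod_cast hlo
  have hhi' : |(m : ℝ)| < (2 : ℝ) ^ (p : ℤ) := by
    rw [zpow_natCast, ← Int.cast_abs]
    exact_mod_cast hhi
  rw [abs_mul, abs_of_pos hscale]
  constructor
  · calc (2 : ℝ) ^ e = 2 ^ ((p : ℤ) - 1) * 2 ^ (e - ((p : ℤ) - 1)) := by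
          rw [← zpow_add₀ two_ne_zero]; ring_nf
      _ ≤ |(m : ℝ)| * 2 ^ (e - ((p : ℤ) - 1)) := by gcongr
  · calc |(m : ℝ)| * 2 ^ (e - ((p : ℤ) - 1)) < 2 ^ (p : ℤ) * 2 ^ (e - ((p : ℤ) - 1)) := by
          gcongr
      _ = 2 ^ (e + 1) := by rw [← zpow_add₀ two_ne_zero]; ring_nf

theorem ulp_dominates_iff_general (p : ℕ) (y : ℝ) (ex ey : ℤ)
    (hy : FpVal p ey y) :
    |y| ≤ (2 : ℝ) ^ (ex - ((p : ℤ) - 1)) ↔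
      (ex - ey > (p : ℤ) - 1 ∨ (ex - ey = (p : ℤ) - 1 ∧ |y| = (2 : ℝ) ^ ey)) := by
  rw [le_zpow_iff_of_mem_Ico one_lt_two hy.abs_mem_Ico]
  exact or_congr (by omega) (and_congr_left' (by omega))

/-- ulp-domination characterization: |y| ≤ ulp(x) iff ex - ey > p - 1, or
ex - ey = p - 1 and y is a power of two. -/
theorem ulp_dominates_iff (p : ℕ) (hp : 1 ≤ p) (x y : ℝ) (ex ey : ℤ)
    (hx : FpVal p ex x) (hy : FpVal p ey y) :
    |y| ≤ (2 : ℝ) ^ (ex - ((p : ℤ) - 1)) ↔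
      (ex - ey > (p : ℤ) - 1 ∨ (ex - ey = (p : ℤ) - 1 ∧ |y| = (2 : ℝ) ^ ey)) :=
  ulp_dominates_iff_general p y ex ey hy
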